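/- arXiv:2210.16922 — 6 statements merged into one kernel-verified Lean document; each statement's English description precedes it below -/
import Mathlib

section
/- Let a > 0 and let J_n(a) be the n×n complex tridiagonal matrix with diagonal entries k/n and symmetric off-diagonal entries i√(ak/n). Then for every unit vector x ∈ ℂⁿ, |Im⟨x, J_n(a)x⟩| < 2√a. -/
/-!
The diagonal of `J_n(a)` is real, so only the off-diagonal entries contribute to
`Im ⟨x, J_n(a) x⟩`; they have modulus at most `c = √(a (n - 1) / n) < √a`. Each row and column
has at most two of them, so by `2 |x_k| |x_l| ≤ |x_k|² + |x_l|²` (the Schur test)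
`|Im ⟨x, J_n(a) x⟩| ≤ 2 c ‖x‖²`.
-/

open Finset ComplexConjugate

lemma sum_ite_le_of_subsingleton {ι : Type*} [Fintype ι] (p : ι → Prop) [DecidablePred p]
    (hp : ∀ i j, p i → p j → i = j) {c : ℝ} (hc : 0 ≤ c) :
    ∑ i, (if p i then c else 0) ≤ c := by
  rw [← sum_filter, sum_const, nsmul_eq_mul]
  have hcard : (univ.filter p).card ≤ 1 :=
    card_le_one.mpr fun i hi j hj => hp i j (mem_filter.mp hi).2 (mem_filter.mp hj).2
  exact mul_le_of_le_one_left hc (by exact_mod_cast hcard)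

lemma Fin.sum_ite_adjacent_le {n : ℕ} (i : Fin n) {c : ℝ} (hc : 0 ≤ c) :
    ∑ j : Fin n, (if i.1 + 1 = j.1 ∨ j.1 + 1 = i.1 then c else 0) ≤ 2 * c := by
  calc ∑ j : Fin n, (if i.1 + 1 = j.1 ∨ j.1 + 1 = i.1 then c else 0)
      ≤ ∑ j : Fin n, ((if i.1 + 1 = j.1 then c else 0) + (if j.1 + 1 = i.1 then c else 0)) := by
        gcongr with j
        split_ifs <;> first | linarith | tauto
    _ ≤ c + c := by
        rw [sum_add_distrib]
        gcongr <;> exact sum_ite_le_of_subsingleton _ (fun j k hj hk => Fin.ext (by omega)) hc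
    _ = 2 * c := by ring

lemma sum_mul_mul_le_of_sum_le {ι : Type*} [Fintype ι] (A : ι → ι → ℝ) (hA : ∀ i j, 0 ≤ A i j)
    {c : ℝ} (hrow : ∀ i, ∑ j, A i j ≤ c) (hcol : ∀ j, ∑ i, A i j ≤ c) (u : ι → ℝ) :
    ∑ i, ∑ j, A i j * (u i * u j) ≤ c * ∑ i, u i ^ 2 := by
  have hamgm : ∀ i j, A i j * (u i * u j) ≤ (u i ^ 2 * A i j + u j ^ 2 * A i j) / 2 := fun i j => by
    nlinarith [mul_nonneg (hA i j) (sq_nonneg (u i - u j))]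
  calc ∑ i, ∑ j, A i j * (u i * u j)
      ≤ ∑ i, ∑ j, (u i ^ 2 * A i j + u j ^ 2 * A i j) / 2 := by gcongr with i _ j; exact hamgm i j
    _ = (∑ i, u i ^ 2 * ∑ j, A i j + ∑ j, u j ^ 2 * ∑ i, A i j) / 2 := by
        simp only [← sum_div, sum_add_distrib, mul_sum]
        rw [sum_comm (f := fun i j => u j ^ 2 * A i j)]
    _ ≤ (∑ i, u i ^ 2 * c + ∑ j, u j ^ 2 * c) / 2 := by
        gcongr with i _ j <;> first | exact hrow i | exact hcol j
    _ = c * ∑ i, u i ^ 2 := by rw [← sum_mul]; ring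

lemma abs_im_sum_conj_mul_mulVec_le {ι : Type*} [Fintype ι] [DecidableEq ι]
    (J : Matrix ι ι ℂ) (hdiag : ∀ i, (J i i).im = 0) (x : ι → ℂ) :
    |(∑ i, conj (x i) * J.mulVec x i).im|
      ≤ ∑ i, ∑ j, (if i = j then 0 else ‖J i j‖) * (‖x i‖ * ‖x j‖) := by
  have hentry : ∀ i j, |(conj (x i) * (J i j * x j)).im|
      ≤ (if i = j then 0 else ‖J i j‖) * (‖x i‖ * ‖x j‖) := by
    intro i j
    split_ifs with hij
    · subst hij
      have hreal : J i i = ((J i i).re : ℂ) := Complex.ext rfl (by simp [hdiag])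
      rw [hreal, mul_left_comm, Complex.conj_mul']
      simp [← Complex.ofReal_pow]
    · calc |(conj (x i) * (J i j * x j)).im| ≤ ‖conj (x i) * (J i j * x j)‖ :=
            Complex.abs_im_le_norm _
        _ = ‖J i j‖ * (‖x i‖ * ‖x j‖) := by simp only [norm_mul, Complex.norm_conj]; ring
  calc |(∑ i, conj (x i) * J.mulVec x i).im|
      = |∑ i, ∑ j, (conj (x i) * (J i j * x j)).im| := by
        simp only [Matrix.mulVec, dotProduct, mul_sum, Complex.im_sum]
    _ ≤ ∑ i, ∑ j, |(conj (x i) * (J i j * x j)).im| :=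
        (abs_sum_le_sum_abs _ _).trans (sum_le_sum fun i _ => abs_sum_le_sum_abs _ _)
    _ ≤ _ := by gcongr with i _ j; exact hentry i j

/-- The matrix `J_n(a)`, indexed from `0`: row `k` is row `k + 1` of the paper. -/
noncomputable def complexJacobi (n : ℕ) (a : ℝ) : Matrix (Fin n) (Fin n) ℂ :=
  Matrix.of fun k l =>
    if k = l then (((k.1 + 1 : ℕ) : ℂ) / (n : ℂ))
    else if k.1 + 1 = l.1 ∨ l.1 + 1 = k.1 then
      Complex.I * (Real.sqrt (a * (min k.1 l.1 + 1) / n) : ℝ)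
    else 0

namespace complexJacobi

variable {n : ℕ} {a : ℝ}

lemma isSymm : (complexJacobi n a).IsSymm := by
  refine Matrix.IsSymm.ext fun k l => ?_
  simp only [complexJacobi, Matrix.of_apply, eq_comm (a := l), or_comm (a := l.1 + 1 = k.1),
    min_comm (l : ℕ)]
  split_ifs with h <;> simp [h]

lemma im_diag (i : Fin n) : (complexJacobi n a i i).im = 0 := by
  simp [complexJacobi]

lemma norm_apply_le (ha : 0 ≤ a) {i j : Fin n} (hij : i ≠ j) :
    ‖complexJacobi n a i j‖
      ≤ if i.1 + 1 = j.1 ∨ j.1 + 1 = i.1 then Real.sqrt (a * (n - 1) / n) else 0 := by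
  simp only [complexJacobi, Matrix.of_apply, if_neg hij]
  split_ifs with hadj
  · rw [norm_mul, Complex.norm_I, one_mul, Complex.norm_real,
      Real.norm_of_nonneg (Real.sqrt_nonneg _)]
    have hmin : ((min i.1 j.1 : ℕ) : ℝ) + 2 ≤ n := by
      exact_mod_cast (by omega : min i.1 j.1 + 2 ≤ n)
    gcongr
    linarith
  · simp

lemma sum_offDiag_norm_le (ha : 0 ≤ a) (i : Fin n) :
    ∑ j, (if i = j then 0 else ‖complexJacobi n a i j‖) ≤ 2 * Real.sqrt (a * (n - 1) / n) :=
  calc ∑ j, (if i = j then 0 else ‖complexJacobi n a i j‖)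
      ≤ ∑ j : Fin n,
          (if i.1 + 1 = j.1 ∨ j.1 + 1 = i.1 then Real.sqrt (a * (n - 1) / n) else 0) := by
        gcongr with j
        by_cases hij : i = j
        · subst hij
          simp
        · rw [if_neg hij]
          exact norm_apply_le ha hij
    _ ≤ 2 * Real.sqrt (a * (n - 1) / n) := Fin.sum_ite_adjacent_le i (Real.sqrt_nonneg _)

end complexJacobi

lemma Real.sqrt_mul_sub_one_div_lt {a : ℝ} (ha : 0 < a) (n : ℕ) :
    Real.sqrt (a * (n - 1) / n) < Real.sqrt a := by
  rcases n.eq_zero_or_pos with rfl | hn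
  · simpa using ha
  · have hn' : (0 : ℝ) < n := by exact_mod_cast hn
    refine Real.sqrt_lt_sqrt ?_ ?_
    · have : (0 : ℝ) ≤ n - 1 := sub_nonneg.mpr (Nat.one_le_cast.mpr hn)
      positivity
    · rw [div_lt_iff₀ hn']
      nlinarith

theorem numerical_range_im_general (n : ℕ) (a : ℝ) (ha : 0 < a)
    (J : Matrix (Fin n) (Fin n) ℂ)
    (hJ : ∀ k l : Fin n, J k l =
      if k = l then (((k.1 + 1 : ℕ) : ℂ) / (n : ℂ))
      else if k.1 + 1 = l.1 ∨ l.1 + 1 = k.1 then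
        Complex.I * (Real.sqrt (a * (min k.1 l.1 + 1) / n) : ℝ)
      else 0)
    (x : Fin n → ℂ) (hx : ∑ i, Complex.normSq (x i) = 1) :
    |(∑ i, (starRingEnd ℂ) (x i) * J.mulVec x i).im| < 2 * Real.sqrt a := by
  obtain rfl : J = complexJacobi n a := Matrix.ext hJ
  have hcol (j : Fin n) : ∑ i, (if i = j then 0 else ‖complexJacobi n a i j‖)
      ≤ 2 * Real.sqrt (a * (n - 1) / n) := by
    simpa only [eq_comm (a := j), complexJacobi.isSymm.apply j] using
      complexJacobi.sum_offDiag_norm_le ha.le j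
  have hx' : ∑ i, ‖x i‖ ^ 2 = 1 := by simpa only [Complex.normSq_eq_norm_sq] using hx
  calc |(∑ i, conj (x i) * (complexJacobi n a).mulVec x i).im|
      ≤ ∑ i, ∑ j, (if i = j then 0 else ‖complexJacobi n a i j‖) * (‖x i‖ * ‖x j‖) :=
        abs_im_sum_conj_mul_mulVec_le _ complexJacobi.im_diag x
    _ ≤ 2 * Real.sqrt (a * (n - 1) / n) * ∑ i, ‖x i‖ ^ 2 :=
        sum_mul_mul_le_of_sum_le _ (fun i j => by split_ifs <;> positivity)
          (complexJacobi.sum_offDiag_norm_le ha.le) hcol _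
    _ < 2 * Real.sqrt a := by
        rw [hx', mul_one]
        gcongr 2 * ?_
        exact Real.sqrt_mul_sub_one_div_lt ha n

theorem numerical_range_im (n : ℕ) (hn : 1 ≤ n) (a : ℝ) (ha : 0 < a)
    (J : Matrix (Fin n) (Fin n) ℂ)
    (hJ : ∀ k l : Fin n, J k l =
      if k = l then (((k.1 + 1 : ℕ) : ℂ) / (n : ℂ))
      else if k.1 + 1 = l.1 ∨ l.1 + 1 = k.1 then
        Complex.I * (Real.sqrt (a * (min k.1 l.1 + 1) / n) : ℝ)
      else 0)
    (x : Fin n → ℂ) (hx : ∑ i, Complex.normSq (x i) = 1) :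
    |(∑ i, (starRingEnd ℂ) (x i) * J.mulVec x i).im| < 2 * Real.sqrt a :=
  numerical_range_im_general n a ha J hJ x hx
end

section
/- Let a > 0 and let J_n(a) be the n×n complex tridiagonal matrix with diagonal k/n and off-diagonals i√(ak/n). Then every eigenvalue λ of J_n(a) satisfies 0 < Re λ ≤ 1 and |Im λ| < 2√a. -/
/-!
Write `J = D + i B` with `D = diag(k/n)` and `B` the real symmetric tridiagonal matrix with
off-diagonal entries `√(a j/n)`, `1 ≤ j < n`. For an eigenvector `v`, `μ ‖v‖² = v*Dv + i v*Bv` with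
both quadratic forms real, so `Re μ` is an average of the diagonal entries `k/n ∈ [1/n, 1]`, and
`|Im μ| ≤ |v*Bv| / ‖v‖²` is bounded by the largest row sum of `|B|` (Schur test), which is at most
`2√(a (n-1)/n) < 2√a`.
-/

open Finset Matrix

theorem card_filter_adjacent_le_two {n : ℕ} (k : Fin n) :
    #{l : Fin n | k.1 + 1 = l.1 ∨ l.1 + 1 = k.1} ≤ 2 := by
  refine (card_le_card_of_injOn Fin.val (t := {k.1 + 1, k.1 - 1}) ?_
    Fin.val_injective.injOn).trans card_le_two
  intro l hl
  simp only [coe_filter, mem_univ, true_and, Set.mem_ofPred_eq] at hl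
  simp only [coe_insert, coe_singleton, Set.mem_insert_iff,
    Set.mem_singleton_iff]
  omega

namespace Matrix

variable {ι 𝕜 : Type*} [Fintype ι] [RCLike 𝕜]

-- Schur test, from `‖v k‖ ‖v l‖ ≤ (‖v k‖² + ‖v l‖²) / 2`.
theorem norm_star_dotProduct_mulVec_le {B : Matrix ι ι 𝕜} {R : ℝ}
    (hrow : ∀ k, ∑ l, ‖B k l‖ ≤ R) (hcol : ∀ l, ∑ k, ‖B k l‖ ≤ R) (v : ι → 𝕜) :
    ‖star v ⬝ᵥ B *ᵥ v‖ ≤ R * ∑ k, ‖v k‖ ^ 2 := by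
  have amgm : ∀ k l, ‖B k l‖ * (‖v k‖ * ‖v l‖) ≤ ‖B k l‖ * (‖v k‖ ^ 2 + ‖v l‖ ^ 2) / 2 :=
    fun k l => by nlinarith [norm_nonneg (B k l), sq_nonneg (‖v k‖ - ‖v l‖)]
  calc ‖star v ⬝ᵥ B *ᵥ v‖ ≤ ∑ k, ∑ l, ‖B k l‖ * (‖v k‖ * ‖v l‖) := by
        refine (norm_sum_le _ _).trans (sum_le_sum fun k _ => ?_)
        rw [Pi.star_apply, mulVec, dotProduct, mul_sum]
        refine (norm_sum_le _ _).trans_eq (sum_congr rfl fun l _ => ?_)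
        rw [norm_mul, norm_mul, norm_star]
        ring
    _ ≤ ∑ k, ∑ l, ‖B k l‖ * (‖v k‖ ^ 2 + ‖v l‖ ^ 2) / 2 := by gcongr with k _ l _; exact amgm k l
    _ = (∑ k, ∑ l, ‖v k‖ ^ 2 * ‖B k l‖ + ∑ k, ∑ l, ‖v l‖ ^ 2 * ‖B k l‖) / 2 := by
        simp only [← sum_div, ← sum_add_distrib]
        congr 1
        exact sum_congr rfl fun k _ => sum_congr rfl fun l _ => by ring
    _ = (∑ k, ‖v k‖ ^ 2 * ∑ l, ‖B k l‖ + ∑ l, ‖v l‖ ^ 2 * ∑ k, ‖B k l‖) / 2 := by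
        rw [sum_comm (f := fun k l => ‖v l‖ ^ 2 * ‖B k l‖)]
        simp only [mul_sum]
    _ ≤ (∑ k, ‖v k‖ ^ 2 * R + ∑ l, ‖v l‖ ^ 2 * R) / 2 := by
        gcongr with k _ l _
        exacts [hrow k, hcol l]
    _ = R * ∑ k, ‖v k‖ ^ 2 := by rw [← sum_mul]; ring

theorem re_im_mul_of_cartesian_mulVec_eq_smul {H K : Matrix ι ι ℂ} (hH : H.IsHermitian)
    (hK : K.IsHermitian) {v : ι → ℂ} {μ : ℂ} (hv : (H + Complex.I • K) *ᵥ v = μ • v) :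
    μ.re * ∑ k, ‖v k‖ ^ 2 = (star v ⬝ᵥ H *ᵥ v).re ∧
      μ.im * ∑ k, ‖v k‖ ^ 2 = (star v ⬝ᵥ K *ᵥ v).re := by
  have hnorm : star v ⬝ᵥ v = ((∑ k, ‖v k‖ ^ 2 : ℝ) : ℂ) := by
    push_cast
    exact sum_congr rfl fun k _ => Complex.conj_mul' (v k)
  have hform : μ * ((∑ k, ‖v k‖ ^ 2 : ℝ) : ℂ) =
      star v ⬝ᵥ H *ᵥ v + Complex.I * (star v ⬝ᵥ K *ᵥ v) := by
    rw [← hnorm, ← smul_eq_mul, ← dotProduct_smul, ← hv, add_mulVec, dotProduct_add, smul_mulVec,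
      dotProduct_smul, smul_eq_mul]
  have hHim := hH.im_star_dotProduct_mulVec_self v
  have hKim := hK.im_star_dotProduct_mulVec_self v
  simp only [RCLike.im_to_complex] at hHim hKim
  constructor
  · simpa only [Complex.re_mul_ofReal, Complex.add_re, Complex.I_mul_re, hKim, neg_zero, add_zero]
      using congrArg Complex.re hform
  · simpa only [Complex.im_mul_ofReal, Complex.add_im, Complex.I_mul_im, hHim, zero_add]
      using congrArg Complex.im hform

theorem re_star_dotProduct_diagonal_mulVec [DecidableEq ι] (d : ι → ℝ) (v : ι → ℂ) :
    (star v ⬝ᵥ diagonal (fun k => (d k : ℂ)) *ᵥ v).re = ∑ k, d k * ‖v k‖ ^ 2 := by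
  simp only [dotProduct, mulVec_diagonal, Complex.re_sum, Pi.star_apply]
  refine sum_congr rfl fun k _ => ?_
  rw [mul_left_comm, RCLike.star_def, Complex.conj_mul', ← Complex.ofReal_pow,
    ← Complex.ofReal_mul, Complex.ofReal_re]

def tridiagonalOffDiag (n : ℕ) (b : ℕ → ℝ) : Matrix (Fin n) (Fin n) ℂ :=
  fun k l => if k.1 + 1 = l.1 ∨ l.1 + 1 = k.1 then (b (min k.1 l.1) : ℂ) else 0

theorem isHermitian_tridiagonalOffDiag (n : ℕ) (b : ℕ → ℝ) :
    (tridiagonalOffDiag n b).IsHermitian := by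
  ext k l
  simp only [conjTranspose_apply, tridiagonalOffDiag, apply_ite star, star_zero,
    Complex.star_def, Complex.conj_ofReal, or_comm, min_comm]

theorem sum_norm_tridiagonalOffDiag_le {n : ℕ} {b : ℕ → ℝ} {c : ℝ} (hc : 0 ≤ c)
    (hb : ∀ j, j + 1 < n → |b j| ≤ c) (k : Fin n) :
    ∑ l, ‖tridiagonalOffDiag n b k l‖ ≤ 2 * c := by
  calc ∑ l, ‖tridiagonalOffDiag n b k l‖
      = ∑ l : Fin n with k.1 + 1 = l.1 ∨ l.1 + 1 = k.1, |b (min k.1 l.1)| := by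
        rw [sum_filter]
        refine sum_congr rfl fun l _ => ?_
        simp only [tridiagonalOffDiag, apply_ite norm, norm_zero, Complex.norm_real,
          Real.norm_eq_abs]
    _ ≤ ∑ l : Fin n with k.1 + 1 = l.1 ∨ l.1 + 1 = k.1, c := by
        refine sum_le_sum fun l hl => hb _ ?_
        simp only [mem_filter, mem_univ, true_and] at hl
        omega
    _ ≤ 2 * c := by
        rw [sum_const, nsmul_eq_mul]
        gcongr
        exact_mod_cast card_filter_adjacent_le_two k

theorem re_mem_Icc_and_abs_im_le_of_mulVec_eq_smul [DecidableEq ι] {d : ι → ℝ} {lo hi : ℝ}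
    (hd : ∀ k, d k ∈ Set.Icc lo hi) {K : Matrix ι ι ℂ} (hK : K.IsHermitian) {R : ℝ}
    (hrow : ∀ k, ∑ l, ‖K k l‖ ≤ R) {v : ι → ℂ} (hv0 : v ≠ 0) {μ : ℂ}
    (hv : (diagonal (fun k => (d k : ℂ)) + Complex.I • K) *ᵥ v = μ • v) :
    μ.re ∈ Set.Icc lo hi ∧ |μ.im| ≤ R := by
  obtain ⟨hre, him⟩ := re_im_mul_of_cartesian_mulVec_eq_smul
    (isHermitian_diagonal_of_self_adjoint _ (funext fun k => Complex.conj_ofReal (d k))) hK hv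
  rw [re_star_dotProduct_diagonal_mulVec] at hre
  set s := ∑ k, ‖v k‖ ^ 2
  have hs : 0 < s := by
    obtain ⟨k, hk⟩ := Function.ne_iff.mp hv0
    exact sum_pos' (fun k _ => by positivity) ⟨k, mem_univ k, pow_pos (norm_pos_iff.mpr hk) 2⟩
  have hcol : ∀ l, ∑ k, ‖K k l‖ ≤ R := fun l => by
    simpa only [← hK.apply l, norm_star] using hrow l
  have hre_lower : lo * s ≤ μ.re * s := by
    rw [hre, mul_sum]
    exact sum_le_sum fun k _ => mul_le_mul_of_nonneg_right (hd k).1 (by positivity)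
  have hre_upper : μ.re * s ≤ hi * s := by
    rw [hre, mul_sum]
    exact sum_le_sum fun k _ => mul_le_mul_of_nonneg_right (hd k).2 (by positivity)
  have him_upper : |μ.im| * s ≤ R * s := by
    rw [← abs_of_pos hs, ← abs_mul, abs_of_pos hs, him]
    exact (Complex.abs_re_le_norm _).trans (norm_star_dotProduct_mulVec_le hrow hcol v)
  exact ⟨⟨le_of_mul_le_mul_right hre_lower hs, le_of_mul_le_mul_right hre_upper hs⟩,
    le_of_mul_le_mul_right him_upper hs⟩

end Matrix

theorem eigenvalue_localization (n : ℕ) (hn : 1 ≤ n) (a : ℝ) (ha : 0 < a)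
    (J : Matrix (Fin n) (Fin n) ℂ)
    (hJ : ∀ k l : Fin n, J k l =
      if k = l then (((k.1 + 1 : ℕ) : ℂ) / (n : ℂ))
      else if k.1 + 1 = l.1 ∨ l.1 + 1 = k.1 then
        Complex.I * (Real.sqrt (a * (min k.1 l.1 + 1) / n) : ℝ)
      else 0)
    (μ : ℂ) (hμ : ∃ v : Fin n → ℂ, v ≠ 0 ∧ J.mulVec v = μ • v) :
    (0 < μ.re ∧ μ.re ≤ 1) ∧ |μ.im| < 2 * Real.sqrt a := by
  obtain ⟨v, hv0, hv⟩ := hμ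
  set d : Fin n → ℝ := fun k => (k.1 + 1) / n
  set b : ℕ → ℝ := fun j => √(a * (j + 1) / n)
  have hJ_eq : J = diagonal (fun k => (d k : ℂ)) + Complex.I • tridiagonalOffDiag n b := by
    ext k l
    rw [hJ]
    by_cases hkl : k = l
    · subst hkl
      simp [tridiagonalOffDiag, d]
    · simp [tridiagonalOffDiag, hkl, b, apply_ite (Complex.I * ·)]
  have hn1 : (1 : ℝ) ≤ n := by exact_mod_cast hn
  have hd : ∀ k, d k ∈ Set.Icc (1 / (n : ℝ)) 1 := fun k => by
    have hk : (k.1 : ℝ) + 1 ≤ n := by exact_mod_cast k.2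
    exact ⟨div_le_div_of_nonneg_right (by linarith [k.1.cast_nonneg (α := ℝ)]) (by linarith),
      (div_le_one (by linarith)).mpr hk⟩
  have hb : ∀ j, j + 1 < n → |b j| ≤ √(a * (n - 1) / n) := fun j hj => by
    have hj' : (j : ℝ) + 1 + 1 ≤ n := by exact_mod_cast hj
    rw [abs_of_nonneg (Real.sqrt_nonneg _)]
    exact Real.sqrt_le_sqrt (div_le_div_of_nonneg_right (by gcongr; linarith) (by linarith))
  have hc : √(a * (n - 1) / n) < √a := by
    refine Real.sqrt_lt_sqrt (div_nonneg (mul_nonneg ha.le (by linarith)) (by linarith)) ?_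
    rw [div_lt_iff₀ (by linarith)]; linarith
  obtain ⟨⟨hre_lower, hre_upper⟩, him⟩ := re_mem_Icc_and_abs_im_le_of_mulVec_eq_smul hd
    (isHermitian_tridiagonalOffDiag n b) (sum_norm_tridiagonalOffDiag_le (Real.sqrt_nonneg _) hb)
    hv0 (hJ_eq ▸ hv)
  exact ⟨⟨(by positivity : (0 : ℝ) < 1 / n).trans_le hre_lower, hre_upper⟩,
    him.trans_lt (by linarith)⟩
end

section
/- Let a > 0 and z ∈ ℂ with 0 < Re z < 1 and 0 < Im z < 2√a. Then the function h(t) = (a - Re z)·log√(1+t²) + (Im z)·arctan(t) + log|t| - c, defined on ℝ \ {0}, has exactly two zeros for every real c: exactly one positive and exactly one negative. -/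
/-!
On each half-line `h' (t) = ((1 + A) t² + B t + 1) / (t (1 + t²))` with `A = a - Re z`,
`B = Im z`; the numerator has discriminant `B² - 4 (1 + A) < (Im z)² - 4 a < 0`, so `h` is strictly
monotone there. It tends to `-∞` at `0` (from `log |t|`) and to `+∞` at `±∞` (from
`((1 + A) / 2) log (1 + t²)`, as `arctan` is bounded), hence takes every value exactly once.
The negative half-line reduces to the positive one, since `t ↦ -t` only changes the sign of `B`.
-/

open Real Filter Set Topology

theorem StrictMonoOn.existsUnique_eq_of_tendsto {f : ℝ → ℝ} {a : ℝ}
    (hmono : StrictMonoOn f (Ioi a)) (hcont : ContinuousOn f (Ioi a))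
    (hbot : Tendsto f (𝓝[>] a) atBot) (htop : Tendsto f atTop atTop) (c : ℝ) :
    ∃! t, a < t ∧ f t = c := by
  obtain ⟨t, ht, hft⟩ : ∃ t ∈ Ioi a, f t = c :=
    hcont.surjOn_of_tendsto nonempty_Ioi ((tendsto_comp_coe_Ioi_atBot).2 hbot)
      (htop.comp (tendsto_Ioi_atTop.1 tendsto_id)) (mem_univ c)
  exact ⟨t, ⟨ht, hft⟩, fun s ⟨hs, hfs⟩ => hmono.injOn hs ht (hfs.trans hft.symm)⟩

/-- `reF A B t = Re f(it; z)`, with `A = a - Re z` and `B = Im z`. -/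
noncomputable def reF (A B t : ℝ) : ℝ :=
  A * ((1 / 2) * Real.log (1 + t ^ 2)) + B * arctan t + Real.log |t|

variable {A B : ℝ}

theorem reF_neg (A B t : ℝ) : reF A B (-t) = reF A (-B) t := by
  simp only [reF, neg_sq, arctan_neg, abs_neg]
  ring

theorem hasDerivAt_reF (A B : ℝ) {t : ℝ} (ht : t ≠ 0) :
    HasDerivAt (reF A B) (((1 + A) * t ^ 2 + B * t + 1) / (t * (1 + t ^ 2))) t := by
  have hpos : 0 < 1 + t ^ 2 := by positivity
  have hlog : HasDerivAt (fun t : ℝ => Real.log (1 + t ^ 2)) (2 * t / (1 + t ^ 2)) t := by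
    simpa using ((hasDerivAt_pow 2 t).const_add 1).log hpos.ne'
  have hlogAbs : HasDerivAt (fun t : ℝ => Real.log |t|) t⁻¹ t := by
    simpa only [Real.log_abs] using hasDerivAt_log ht
  have hd : HasDerivAt (reF A B)
      (A * ((1 / 2) * (2 * t / (1 + t ^ 2))) + B * (1 / (1 + t ^ 2)) + t⁻¹) t :=
    (((hlog.const_mul (1 / 2)).const_mul A).add ((hasDerivAt_arctan t).const_mul B)).add hlogAbs
  convert hd using 1
  field_simp
  ring

theorem continuousOn_reF (A B : ℝ) : ContinuousOn (reF A B) (Ioi 0) := fun _ ht =>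
  (hasDerivAt_reF A B (ne_of_gt ht)).continuousAt.continuousWithinAt

theorem strictMonoOn_reF (hdisc : B ^ 2 < 4 * (1 + A)) : StrictMonoOn (reF A B) (Ioi 0) := by
  refine strictMonoOn_of_deriv_pos (convex_Ioi 0) (continuousOn_reF A B) fun t ht => ?_
  rw [interior_Ioi] at ht
  rw [(hasDerivAt_reF A B (ne_of_gt ht)).deriv]
  have hquad : 0 < (1 + A) * t ^ 2 + B * t + 1 := by
    nlinarith [sq_nonneg (2 * (1 + A) * t + B), sq_nonneg B]
  exact div_pos hquad (mul_pos ht (by positivity))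

theorem tendsto_reF_nhdsGT_zero (A B : ℝ) : Tendsto (reF A B) (𝓝[>] 0) atBot := by
  have hcont : Continuous fun t : ℝ => A * ((1 / 2) * Real.log (1 + t ^ 2)) + B * arctan t :=
    by fun_prop (disch := intro; positivity)
  refine Tendsto.add_atBot ((hcont.tendsto 0).mono_left nhdsWithin_le_nhds) ?_
  simpa using tendsto_log_nhdsGT_zero

theorem tendsto_reF_atTop (hA : 0 < 1 + A) : Tendsto (reF A B) atTop atTop := by
  have hlog : Tendsto (fun t : ℝ => Real.log (1 + t ^ 2)) atTop atTop :=
    tendsto_log_atTop.comp (tendsto_atTop_add_const_left _ 1 (tendsto_pow_atTop two_ne_zero))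
  have hlower : Tendsto
      (fun t : ℝ => ((1 + A) / 2 * Real.log (1 + t ^ 2) - 1 / 2 * Real.log 2) + B * arctan t)
      atTop atTop :=
    (tendsto_atTop_add_const_right _ _ (hlog.const_mul_atTop (by positivity))).atTop_add
      ((tendsto_arctan_atTop.mono_right nhdsWithin_le_nhds).const_mul B)
  refine tendsto_atTop_mono' atTop ?_ hlower
  filter_upwards [eventually_ge_atTop 1] with t ht
  have hlog_t : Real.log ((1 + t ^ 2) / 2) ≤ Real.log (t ^ 2) :=
    log_le_log (by positivity) (by nlinarith)
  rw [log_div (by positivity) two_ne_zero, log_pow] at hlog_t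
  simp only [reF, abs_of_pos (zero_lt_one.trans_le ht)]
  push_cast at hlog_t
  linarith

theorem existsUnique_pos_reF_eq (hdisc : B ^ 2 < 4 * (1 + A)) (c : ℝ) :
    ∃! t, 0 < t ∧ reF A B t = c :=
  (strictMonoOn_reF hdisc).existsUnique_eq_of_tendsto (continuousOn_reF A B)
    (tendsto_reF_nhdsGT_zero A B) (tendsto_reF_atTop (by nlinarith [sq_nonneg B])) c

theorem existsUnique_neg_reF_eq (hdisc : B ^ 2 < 4 * (1 + A)) (c : ℝ) :
    ∃! t, t < 0 ∧ reF A B t = c := by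
  obtain ⟨s, ⟨hs, hfs⟩, huniq⟩ := existsUnique_pos_reF_eq (B := -B) (by rwa [neg_sq]) c
  refine ⟨-s, ⟨neg_neg_of_pos hs, by rwa [reF_neg]⟩, fun t ⟨ht, hft⟩ => ?_⟩
  rw [← neg_neg t, huniq (-t) ⟨neg_pos.2 ht, by rwa [← reF_neg, neg_neg]⟩]

theorem h_two_zeros_general (a : ℝ) (z : ℂ) (c : ℝ)
    (hre1 : z.re < 1)
    (him0 : 0 < z.im) (him1 : z.im < 2 * Real.sqrt a) :
    (∃! t : ℝ, 0 < t ∧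
      (a - z.re) * ((1 / 2) * Real.log (1 + t ^ 2)) + z.im * Real.arctan t
        + Real.log |t| - c = 0) ∧
    (∃! t : ℝ, t < 0 ∧
      (a - z.re) * ((1 / 2) * Real.log (1 + t ^ 2)) + z.im * Real.arctan t
        + Real.log |t| - c = 0) := by
  have hsqrt : 0 < Real.sqrt a := by linarith
  have hdisc : z.im ^ 2 < 4 * (1 + (a - z.re)) := by
    nlinarith [Real.sq_sqrt (Real.sqrt_pos.1 hsqrt).le]
  simp only [sub_eq_zero]
  exact ⟨existsUnique_pos_reF_eq hdisc c, existsUnique_neg_reF_eq hdisc c⟩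

theorem h_two_zeros (a : ℝ) (ha : 0 < a) (z : ℂ) (c : ℝ)
    (hre0 : 0 < z.re) (hre1 : z.re < 1)
    (him0 : 0 < z.im) (him1 : z.im < 2 * Real.sqrt a) :
    (∃! t : ℝ, 0 < t ∧
      (a - z.re) * ((1 / 2) * Real.log (1 + t ^ 2)) + z.im * Real.arctan t
        + Real.log |t| - c = 0) ∧
    (∃! t : ℝ, t < 0 ∧
      (a - z.re) * ((1 / 2) * Real.log (1 + t ^ 2)) + z.im * Real.arctan t
        + Real.log |t| - c = 0) :=
  h_two_zeros_general a z c hre1 him0 him1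
end

section
/- Let a > 0 and suppose ξ± = (1/(2a))(1 - z ± √((1-z)² + 4a)) satisfy |1 + ξ₊| = |1 + ξ₋| for some z ∈ ℂ with 1 + ξ₋ ≠ 0. Then |z - a| = 1 + a and Re z ≥ 1. -/
/-!
Write `u = 2a + 1 - z` and let `w` be the chosen square root, so that `1 + ξ± = (u ± w) / (2a)`
and `w² = (u - 2a)² + 4a`. Equal moduli of `u + w` and `u - w` mean `w = i s u` for a real `s`
(or `u = 0`), and then `u` is a root of the real quadratic `(1 + s²) X² - 4a X + 4a(1 + a)`,
whose discriminant is negative. Its roots are a conjugate pair, so Vieta gives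
`(1 + s²) |u|² = 4a(1 + a)` and `(1 + s²) Re u = 2a`, i.e. `|u - (1 + a)| = 1 + a` and
`Re u ≤ 2a`.
-/

open Complex ComplexConjugate

namespace Complex

lemma re_mul_conj_eq_zero_of_norm_add_eq_norm_sub {u w : ℂ} (h : ‖u + w‖ = ‖u - w‖) :
    (u * conj w).re = 0 := by
  have h2 : normSq (u + w) = normSq (u - w) := by
    rw [← Complex.sq_norm, ← Complex.sq_norm, h]
  rw [normSq_add, normSq_sub] at h2
  linarith

lemma exists_eq_ofReal_mul_I_mul_of_re_mul_conj_eq_zero {u w : ℂ} (hu : u ≠ 0)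
    (h : (u * conj w).re = 0) : ∃ s : ℝ, w = s * I * u := by
  have hre : (w / u).re = 0 := by
    rw [div_re, ← add_div, div_eq_zero_iff]
    simp only [mul_re, conj_re, conj_im] at h
    left
    linarith
  refine ⟨(w / u).im, ?_⟩
  calc w = w / u * u := (div_mul_cancel₀ w hu).symm
    _ = _ := by rw [← re_add_im (w / u), hre]; simp

lemma normSq_eq_and_re_eq_of_quadratic_eq_zero {A B C : ℝ} (hdiscrim : discrim A B C < 0)
    {u : ℂ} (hu : A * u ^ 2 + B * u + C = 0) :
    A * normSq u = C ∧ 2 * A * u.re = -B := by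
  have hre := congrArg re hu
  have him := congrArg im hu
  simp only [sq, add_re, mul_re, ofReal_re, ofReal_im, mul_im, zero_mul, sub_zero, zero_re,
    add_im, add_zero, zero_im] at hre him
  have hy : u.im ≠ 0 := by
    intro hy
    refine quadratic_ne_zero_of_discrim_ne_sq (fun s hs => ?_) u.re (by simpa [hy] using hre)
    nlinarith [sq_nonneg s]
  have hx : 2 * A * u.re + B = 0 := by
    refine (mul_eq_zero.mp ?_).resolve_right hy
    linear_combination him
  refine ⟨?_, by linarith⟩
  rw [normSq_apply]
  linear_combination u.re * hx - hre

lemma normSq_eq_and_re_le_of_norm_add_eq_norm_sub {a : ℝ} (ha : 0 < a) {u w : ℂ}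
    (huw : ‖u + w‖ = ‖u - w‖) (hw : w ^ 2 = (u - 2 * a) ^ 2 + 4 * a) :
    normSq u = 2 * (1 + a) * u.re ∧ u.re ≤ 2 * a := by
  rcases eq_or_ne u 0 with rfl | hu
  · simp only [map_zero, zero_re, mul_zero, true_and]
    positivity
  obtain ⟨s, rfl⟩ := exists_eq_ofReal_mul_I_mul_of_re_mul_conj_eq_zero hu
    (re_mul_conj_eq_zero_of_norm_add_eq_norm_sub huw)
  have hquad : ((1 + s ^ 2 : ℝ) : ℂ) * u ^ 2 + ((-4 * a : ℝ) : ℂ) * u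
      + ((4 * a * (1 + a) : ℝ) : ℂ) = 0 := by
    push_cast
    linear_combination -hw + s ^ 2 * u ^ 2 * I_sq
  have hdiscrim : discrim (1 + s ^ 2) (-4 * a) (4 * a * (1 + a)) < 0 := by
    rw [discrim]
    nlinarith [mul_nonneg ha.le (sq_nonneg s)]
  obtain ⟨hnormSq, hre⟩ := normSq_eq_and_re_eq_of_quadratic_eq_zero hdiscrim hquad
  constructor
  · have h : (1 + s ^ 2) * (normSq u - 2 * (1 + a) * u.re) = 0 := by
      linear_combination hnormSq - (1 + a) * hre
    linarith [(mul_eq_zero.mp h).resolve_left (by positivity)]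
  · nlinarith [sq_nonneg s]

end Complex

theorem abs_ratio_one_implies_circle_general (a : ℝ) (ha : 0 < a) (z : ℂ)
    (habs : ‖
        (1 + (1 - z + ((1 - z) ^ 2 + 4 * (a : ℂ)) ^ ((1 : ℂ) / 2)) / (2 * (a : ℂ)))‖ =
      ‖
        (1 + (1 - z - ((1 - z) ^ 2 + 4 * (a : ℂ)) ^ ((1 : ℂ) / 2)) / (2 * (a : ℂ)))‖) :
    ‖z - (a : ℂ)‖ = 1 + a ∧ 1 ≤ z.re := by
  set w := ((1 - z) ^ 2 + 4 * (a : ℂ)) ^ ((1 : ℂ) / 2)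
  set u : ℂ := 2 * a + 1 - z
  have hw : w ^ 2 = (u - 2 * a) ^ 2 + 4 * a := by
    rw [show u - 2 * a = 1 - z by ring]
    simp only [w, one_div, cpow_ofNat_inv_pow]
  have ha' : (a : ℂ) ≠ 0 := ofReal_ne_zero.mpr ha.ne'
  have huw : ‖u + w‖ = ‖u - w‖ := by
    have hadd : 1 + (1 - z + w) / (2 * a) = (u + w) / (2 * a) := by field_simp; ring
    have hsub : 1 + (1 - z - w) / (2 * a) = (u - w) / (2 * a) := by field_simp; ring
    rw [hadd, hsub, norm_div, norm_div] at habs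
    exact (div_left_inj' (by simpa using ha')).mp habs
  obtain ⟨hcircle, hre⟩ := normSq_eq_and_re_le_of_norm_add_eq_norm_sub ha huw hw
  have hure : u.re = 2 * a + 1 - z.re := by simp [u]
  refine ⟨?_, by linarith⟩
  have hsq : ‖z - a‖ ^ 2 = (1 + a) ^ 2 := by
    rw [Complex.sq_norm, show z - a = ((1 + a : ℝ) : ℂ) - u by push_cast; ring, normSq_sub]
    simp only [normSq_ofReal, re_ofReal_mul, conj_re]
    linarith
  exact (pow_left_inj₀ (norm_nonneg _) (by positivity) two_ne_zero).mp hsq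

theorem abs_ratio_one_implies_circle (a : ℝ) (ha : 0 < a) (z : ℂ)
    (hne : 1 + (1 - z - ((1 - z) ^ 2 + 4 * (a : ℂ)) ^ ((1 : ℂ) / 2)) / (2 * (a : ℂ)) ≠ 0)
    (habs : ‖
        (1 + (1 - z + ((1 - z) ^ 2 + 4 * (a : ℂ)) ^ ((1 : ℂ) / 2)) / (2 * (a : ℂ)))‖ =
      ‖
        (1 + (1 - z - ((1 - z) ^ 2 + 4 * (a : ℂ)) ^ ((1 : ℂ) / 2)) / (2 * (a : ℂ)))‖) :
    ‖z - (a : ℂ)‖ = 1 + a ∧ 1 ≤ z.re :=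
  abs_ratio_one_implies_circle_general a ha z habs
end

section
/- Let a > 0 and suppose (1+ξ₊)/(1+ξ₋) = t for some real t ≠ 0, where ξ± = (1/(2a))(1 - z ± √((1-z)² + 4a)). Then either Im z = 0, or |z - a| = 1 + a and Re z ≤ 1. -/
/-!
Writing `w` for the square root, the ratio condition clears to
`(1 + t) w = (t - 1)(2a + 1 - z)`; squaring and using `w² = (1 - z)² + 4a` eliminates `w` and
leaves a quadratic in `z` with real coefficients. For a non-real root, the imaginary part of the
quadratic forces `2t (1 - Re z) = a (1 - t)²`, and then its real part says
`4 t² (Im z)² = a (1 + t)² (4t - a (1 - t)²)`, so `t > 0`; this gives `Re z ≤ 1`, and the real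
part rearranges to `t |z - a|² = t (1 + a)²`.
-/

lemma Complex.cpow_one_half_sq (u : ℂ) : (u ^ ((1 : ℂ) / 2)) ^ 2 = u := by
  simp [one_div, Complex.cpow_ofNat_inv_pow]

lemma ratio_quadratic {K : Type*} [Field K] [NeZero (2 : K)] {a t z w : K} (ha : a ≠ 0)
    (hw : w ^ 2 = (1 - z) ^ 2 + 4 * a) (hD : 1 + (1 - z - w) / (2 * a) ≠ 0)
    (hrat : (1 + (1 - z + w) / (2 * a)) / (1 + (1 - z - w) / (2 * a)) = t) :
    t * (1 - z) ^ 2 - a * (1 - t) ^ 2 * (1 - z) + a * (1 + t) ^ 2 - a ^ 2 * (1 - t) ^ 2 = 0 := by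
  rw [div_eq_iff hD] at hrat
  have hlin : (1 + t) * w = (t - 1) * (2 * a + 1 - z) := by
    field_simp at hrat
    linear_combination hrat
  have h4 : (4 : K) ≠ 0 := by
    rw [show (4 : K) = 2 * 2 by norm_num]
    exact mul_ne_zero two_ne_zero two_ne_zero
  refine (mul_eq_zero.mp ?_).resolve_left h4
  linear_combination ((1 + t) * w + (t - 1) * (2 * a + 1 - z)) * hlin - (1 + t) ^ 2 * hw

lemma re_im_of_ratio_quadratic {a t : ℝ} {z : ℂ}
    (hq : (t : ℂ) * (1 - z) ^ 2 - a * (1 - t) ^ 2 * (1 - z) + a * (1 + t) ^ 2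
      - a ^ 2 * (1 - t) ^ 2 = 0) :
    t * ((1 - z.re) ^ 2 - z.im ^ 2) - a * (1 - t) ^ 2 * (1 - z.re) + a * (1 + t) ^ 2
      - a ^ 2 * (1 - t) ^ 2 = 0 ∧
    z.im * (2 * t * (1 - z.re) - a * (1 - t) ^ 2) = 0 := by
  have hre := congrArg Complex.re hq
  have him := congrArg Complex.im hq
  simp only [Complex.add_re, Complex.add_im, Complex.sub_re, Complex.sub_im, Complex.mul_re,
    Complex.mul_im, Complex.ofReal_re, Complex.ofReal_im, Complex.one_re, Complex.one_im,
    Complex.zero_re, Complex.zero_im, pow_two] at hre him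
  constructor
  · linear_combination hre
  · linear_combination -him

lemma circle_of_ratio_quadratic_re_im {a t x y : ℝ} (ha : 0 < a) (hy : y ≠ 0)
    (hre : t * ((1 - x) ^ 2 - y ^ 2) - a * (1 - t) ^ 2 * (1 - x) + a * (1 + t) ^ 2
      - a ^ 2 * (1 - t) ^ 2 = 0)
    (him : 2 * t * (1 - x) = a * (1 - t) ^ 2) :
    (x - a) ^ 2 + y ^ 2 = (1 + a) ^ 2 ∧ x ≤ 1 := by
  have ht : t ≠ 0 := by
    rintro rfl
    norm_num at him
    exact ha.ne' him.symm
  have hdisc : 4 * t ^ 2 * y ^ 2 = a * (1 + t) ^ 2 * (4 * t - a * (1 - t) ^ 2) := by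
    linear_combination -4 * t * hre + (2 * t * (1 - x) - a * (1 - t) ^ 2) * him
  have htpos : 0 < t := by
    have hpos : 0 < 4 * t - a * (1 - t) ^ 2 :=
      pos_of_mul_pos_right (hdisc ▸ (by positivity : 0 < 4 * t ^ 2 * y ^ 2)) (by positivity)
    nlinarith [mul_nonneg ha.le (sq_nonneg (1 - t))]
  refine ⟨mul_left_cancel₀ htpos.ne' ?_, ?_⟩
  · linear_combination -hre + (a - x) * him
  · nlinarith [mul_nonneg ha.le (sq_nonneg (1 - t))]

theorem real_ratio_implies_real_or_circle_general (a : ℝ) (ha : 0 < a) (z : ℂ) (t : ℝ)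
    (hne : 1 + (1 - z - ((1 - z) ^ 2 + 4 * (a : ℂ)) ^ ((1 : ℂ) / 2)) / (2 * (a : ℂ)) ≠ 0)
    (hrat : (1 + (1 - z + ((1 - z) ^ 2 + 4 * (a : ℂ)) ^ ((1 : ℂ) / 2)) / (2 * (a : ℂ))) /
        (1 + (1 - z - ((1 - z) ^ 2 + 4 * (a : ℂ)) ^ ((1 : ℂ) / 2)) / (2 * (a : ℂ))) = (t : ℂ)) :
    z.im = 0 ∨ (‖z - (a : ℂ)‖ = 1 + a ∧ z.re ≤ 1) := by
  have hq := ratio_quadratic (Complex.ofReal_ne_zero.mpr ha.ne')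
    (Complex.cpow_one_half_sq _) hne hrat
  obtain ⟨hre, him⟩ := re_im_of_ratio_quadratic hq
  rcases eq_or_ne z.im 0 with hy | hy
  · exact Or.inl hy
  obtain ⟨hcirc, hx⟩ :=
    circle_of_ratio_quadratic_re_im ha hy hre (sub_eq_zero.mp ((mul_eq_zero.mp him).resolve_left hy))
  refine Or.inr ⟨?_, hx⟩
  rw [Complex.norm_eq_sqrt_sq_add_sq, Complex.sub_re, Complex.sub_im, Complex.ofReal_re,
    Complex.ofReal_im, sub_zero, hcirc, Real.sqrt_sq (by linarith)]

theorem real_ratio_implies_real_or_circle (a : ℝ) (ha : 0 < a) (z : ℂ) (t : ℝ) (ht : t ≠ 0)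
    (hne : 1 + (1 - z - ((1 - z) ^ 2 + 4 * (a : ℂ)) ^ ((1 : ℂ) / 2)) / (2 * (a : ℂ)) ≠ 0)
    (hrat : (1 + (1 - z + ((1 - z) ^ 2 + 4 * (a : ℂ)) ^ ((1 : ℂ) / 2)) / (2 * (a : ℂ))) /
        (1 + (1 - z - ((1 - z) ^ 2 + 4 * (a : ℂ)) ^ ((1 : ℂ) / 2)) / (2 * (a : ℂ))) = (t : ℂ)) :
    z.im = 0 ∨ (‖z - (a : ℂ)‖ = 1 + a ∧ z.re ≤ 1) :=
  real_ratio_implies_real_or_circle_general a ha z t hne hrat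
end

section
/- For all a > 0, the quantity g(0) := (2a+1)·log((√(1+4a)+1)/(√(1+4a)-1)) - √(1+4a) is strictly positive. -/
/-!
Since `log ((s + 1) / (s - 1)) = ∑ₖ 2 / ((2k + 1) s^(2k + 1))` has nonnegative terms, it is at
least its first term `2 / s`, and `(s² + 1) / 2 · 2 / s = s + 1 / s > s`.
-/

open Real

lemma two_div_le_log_one_add_inv {b : ℝ} (hb : 0 < b) : 2 / (2 * b + 1) ≤ log (1 + b⁻¹) := by
  have h := le_hasSum (hasSum_log_one_add_inv hb) 0 fun k _ => by positivity
  simpa [div_eq_mul_inv] using h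

lemma two_div_le_log_add_one_div_sub_one {s : ℝ} (hs : 1 < s) :
    2 / s ≤ log ((s + 1) / (s - 1)) := by
  have h := two_div_le_log_one_add_inv (b := (s - 1) / 2) (by linarith)
  have hs_sub : s - 1 ≠ 0 := by linarith
  convert h using 2
  · ring
  · field_simp; ring

lemma lt_half_sq_add_one_mul_log {s : ℝ} (hs : 1 < s) :
    s < (s ^ 2 + 1) / 2 * log ((s + 1) / (s - 1)) :=
  calc s < (s ^ 2 + 1) / 2 * (2 / s) := by
        field_simp; linarith
    _ ≤ (s ^ 2 + 1) / 2 * log ((s + 1) / (s - 1)) := by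
        gcongr; exact two_div_le_log_add_one_div_sub_one hs

theorem g_zero_pos (a : ℝ) (ha : 0 < a) :
    0 < (2 * a + 1) *
        Real.log ((Real.sqrt (1 + 4 * a) + 1) / (Real.sqrt (1 + 4 * a) - 1)) -
      Real.sqrt (1 + 4 * a) := by
  have hs : 1 < √(1 + 4 * a) := by
    rw [lt_sqrt zero_le_one]; linarith
  have hsq : 2 * a + 1 = (√(1 + 4 * a) ^ 2 + 1) / 2 := by
    rw [sq_sqrt (by linarith)]; ring
  rw [hsq, sub_pos]
  exact lt_half_sq_add_one_mul_log hs
end
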